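/- arXiv:math-ph/0212012 — 4 statements merged into one kernel-verified Lean document; each statement's English description precedes it below -/
import Mathlib

section
/- The function d(S,S') = min(1/√2, inf D(S,S')), where D(S,S') is the set of a > 0 such that S ∩ B_{1/a} ⊆ S' + B_a and S' ∩ B_{1/a} ⊆ S + B_a (with B_r the closed ball of radius r centered at the origin in ℝⁿ), defines a metric on the set of locally finite subsets of ℝⁿ. -/
open Metric Set Pointwise

/-- `S` is locally finite: its intersection with every compact set is finite. -/
def LocallyFiniteSet {n : ℕ} (S : Set (EuclideanSpace ℝ (Fin n))) : Prop :=
  ∀ K : Set (EuclideanSpace ℝ (Fin n)), IsCompact K → (S ∩ K).Finite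

/-- The set `D(S,S')` of scales `a > 0` at which `S` and `S'` agree up to `a`. -/
def DSet {n : ℕ} (S S' : Set (EuclideanSpace ℝ (Fin n))) : Set ℝ :=
  {a : ℝ | 0 < a ∧ S ∩ closedBall (0 : EuclideanSpace ℝ (Fin n)) a⁻¹ ⊆ S' + closedBall (0 : EuclideanSpace ℝ (Fin n)) a ∧
    S' ∩ closedBall (0 : EuclideanSpace ℝ (Fin n)) a⁻¹ ⊆ S + closedBall (0 : EuclideanSpace ℝ (Fin n)) a}

/-- `d(S,S') = min (1/√2, inf D(S,S'))`, realized as `sInf (insert (1/√2) D)`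
(so that `d = 1/√2` when `D(S,S') = ∅`, matching the convention `inf ∅ = +∞`). -/
noncomputable def dLF {n : ℕ} (S S' : Set (EuclideanSpace ℝ (Fin n))) : ℝ :=
  sInf (insert (Real.sqrt 2)⁻¹ (DSet S S'))

lemma hc_pos : (0:ℝ) < (Real.sqrt 2)⁻¹ := by positivity

lemma dLF_bdd {n : ℕ} (S S' : Set (EuclideanSpace ℝ (Fin n))) :
    BddBelow (insert (Real.sqrt 2)⁻¹ (DSet S S')) := by
  refine ⟨0, fun x hx => ?_⟩
  rcases hx with rfl | hx
  · exact hc_pos.le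
  · exact hx.1.le

lemma isClosed_of_locallyFinite {n : ℕ} {S : Set (EuclideanSpace ℝ (Fin n))}
    (hS : LocallyFiniteSet S) : IsClosed S := by
  rw [← closure_subset_iff_isClosed]
  intro x hx
  have hF : (S ∩ closedBall x 1).Finite := hS _ (isCompact_closedBall x 1)
  have hxF : x ∈ closure (S ∩ closedBall x 1) := by
    rw [Metric.mem_closure_iff] at hx ⊢
    intro ε hε
    obtain ⟨b, hb, hdist⟩ := hx (min ε 1) (lt_min hε one_pos)
    refine ⟨b, ⟨hb, ?_⟩, lt_of_lt_of_le hdist (min_le_left _ _)⟩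
    rw [mem_closedBall, dist_comm]
    exact (lt_of_lt_of_le hdist (min_le_right _ _)).le
  rw [hF.isClosed.closure_eq] at hxF
  exact hxF.1

lemma self_mem_DSet {n : ℕ} {S : Set (EuclideanSpace ℝ (Fin n))} {a : ℝ} (ha : 0 < a) :
    a ∈ DSet S S := by
  refine ⟨ha, ?_, ?_⟩ <;>
  · intro x hx
    exact Set.mem_add.mpr ⟨x, hx.1, 0, mem_closedBall_self ha.le, add_zero x⟩

lemma key_ineq {a b : ℝ} (ha : 0 < a) (hb : 0 < b)
    (ha2 : a ≤ (Real.sqrt 2)⁻¹) (hb2 : b ≤ (Real.sqrt 2)⁻¹) : (a+b)⁻¹ + a ≤ b⁻¹ := by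
  have hab : 0 < a + b := add_pos ha hb
  have hs2 : Real.sqrt 2 * Real.sqrt 2 = 2 := Real.mul_self_sqrt (by norm_num)
  have hcc : (Real.sqrt 2)⁻¹ * (Real.sqrt 2)⁻¹ = 1/2 := by
    rw [← mul_inv, hs2]; norm_num
  have h1 : b * (a + b) ≤ 1 := by nlinarith [hc_pos]
  rw [inv_eq_one_div (a+b), inv_eq_one_div b, div_add' _ _ _ hab.ne', div_le_div_iff₀ hab hb]
  nlinarith [mul_le_mul_of_nonneg_left h1 ha.le]

lemma chain {n : ℕ} {S S' S'' : Set (EuclideanSpace ℝ (Fin n))} {a b : ℝ}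
    (ha : 0 < a) (hb : 0 < b) (hkey : (a+b)⁻¹ + a ≤ b⁻¹)
    (h1 : S ∩ closedBall (0 : EuclideanSpace ℝ (Fin n)) a⁻¹ ⊆ S' + closedBall (0 : EuclideanSpace ℝ (Fin n)) a)
    (h2 : S' ∩ closedBall (0 : EuclideanSpace ℝ (Fin n)) b⁻¹ ⊆ S'' + closedBall (0 : EuclideanSpace ℝ (Fin n)) b) :
    S ∩ closedBall (0 : EuclideanSpace ℝ (Fin n)) (a+b)⁻¹ ⊆
      S'' + closedBall (0 : EuclideanSpace ℝ (Fin n)) (a+b) := by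
  intro x hx
  have hxn : ‖x‖ ≤ (a+b)⁻¹ := by simpa using hx.2
  have hxa : ‖x‖ ≤ a⁻¹ := hxn.trans (inv_anti₀ ha (le_add_of_nonneg_right hb.le))
  obtain ⟨y, hy, u, hu, hyu⟩ := Set.mem_add.mp (h1 ⟨hx.1, by simpa using hxa⟩)
  have hun : ‖u‖ ≤ a := by simpa using hu
  have hyn : ‖y‖ ≤ b⁻¹ := by
    have : ‖y‖ ≤ ‖x‖ + ‖u‖ := by
      calc ‖y‖ = ‖x - u‖ := by rw [← hyu, add_sub_cancel_right]
      _ ≤ ‖x‖ + ‖u‖ := norm_sub_le _ _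
    linarith
  obtain ⟨z, hz, v, hv, hzv⟩ := Set.mem_add.mp (h2 ⟨hy, by simpa using hyn⟩)
  have hvn : ‖v‖ ≤ b := by simpa using hv
  refine Set.mem_add.mpr ⟨z, hz, v + u, by simpa using (norm_add_le v u).trans (by linarith), ?_⟩
  rw [← hyu, ← hzv, add_assoc]


lemma DSet_symm {n : ℕ} (S S' : Set (EuclideanSpace ℝ (Fin n))) : DSet S S' = DSet S' S := by
  ext a; exact ⟨fun h => ⟨h.1, h.2.2, h.2.1⟩, fun h => ⟨h.1, h.2.2, h.2.1⟩⟩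

lemma dLF_nonneg {n : ℕ} (S S' : Set (EuclideanSpace ℝ (Fin n))) : 0 ≤ dLF S S' := by
  apply Real.sInf_nonneg
  intro x hx
  rcases hx with rfl | hx
  · exact hc_pos.le
  · exact hx.1.le

lemma exists_small {n : ℕ} {S S' : Set (EuclideanSpace ℝ (Fin n))} (h : dLF S S' = 0) :
    ∀ ε > 0, ∃ a ∈ DSet S S', a < ε := by
  intro ε hε
  have h0 : sInf (insert (Real.sqrt 2)⁻¹ (DSet S S')) < min ε (Real.sqrt 2)⁻¹ := by
    rw [show sInf (insert (Real.sqrt 2)⁻¹ (DSet S S')) = dLF S S' from rfl, h]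
    exact lt_min hε hc_pos
  obtain ⟨a, ha, hlt⟩ := exists_lt_of_csInf_lt ⟨_, mem_insert _ _⟩ h0
  rcases ha with rfl | ha
  · exact absurd (lt_of_lt_of_le hlt (min_le_right _ _)) (lt_irrefl _)
  · exact ⟨a, ha, lt_of_lt_of_le hlt (min_le_left _ _)⟩

lemma subset_of_dLF_eq_zero {n : ℕ} {S S' : Set (EuclideanSpace ℝ (Fin n))}
    (hS' : LocallyFiniteSet S') (h : dLF S S' = 0) : S ⊆ S' := by
  intro x hx
  have hcl : IsClosed S' := isClosed_of_locallyFinite hS'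
  rw [← hcl.closure_eq, Metric.mem_closure_iff]
  intro δ hδ
  have hpos : (0:ℝ) < min δ (1 + ‖x‖)⁻¹ := lt_min hδ (by positivity)
  obtain ⟨a, haD, halt⟩ := exists_small h _ hpos
  have ha : 0 < a := haD.1
  have hax : ‖x‖ ≤ a⁻¹ := by
    have h1 : a < (1 + ‖x‖)⁻¹ := lt_of_lt_of_le halt (min_le_right _ _)
    have h2 : (1 + ‖x‖) < a⁻¹ := by
      rw [← inv_inv (1 + ‖x‖)]
      exact inv_strictAnti₀ ha h1
    linarith [norm_nonneg x]
  obtain ⟨y, hy, u, hu, hyu⟩ := Set.mem_add.mp (haD.2.1 ⟨hx, by simpa using hax⟩)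
  refine ⟨y, hy, ?_⟩
  have : dist x y = ‖u‖ := by rw [dist_eq_norm, ← hyu, add_sub_cancel_left]
  rw [this]
  have hun : ‖u‖ ≤ a := by simpa using hu
  exact lt_of_le_of_lt hun (lt_of_lt_of_le halt (min_le_left _ _))

lemma dLF_self {n : ℕ} (S : Set (EuclideanSpace ℝ (Fin n))) : dLF S S = 0 := by
  refine le_antisymm (le_of_forall_pos_le_add fun ε hε => ?_) (dLF_nonneg S S)
  rw [zero_add]
  calc dLF S S ≤ ε / 2 :=
        csInf_le (dLF_bdd S S) (mem_insert_of_mem _ (self_mem_DSet (half_pos hε)))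
    _ ≤ ε := by linarith

/-- `d` is a metric on the set of locally finite subsets of `ℝⁿ`. -/
theorem dLF_is_metric {n : ℕ} (S S' S'' : Set (EuclideanSpace ℝ (Fin n)))
    (hS : LocallyFiniteSet S) (hS' : LocallyFiniteSet S') (hS'' : LocallyFiniteSet S'') :
    0 ≤ dLF S S' ∧ (dLF S S' = 0 ↔ S = S') ∧ dLF S S' = dLF S' S ∧
      dLF S S'' ≤ dLF S S' + dLF S' S'' := by
  have hsymm : ∀ T T' : Set (EuclideanSpace ℝ (Fin n)), dLF T T' = dLF T' T := by
    intro T T'; unfold dLF; rw [DSet_symm]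
  refine ⟨dLF_nonneg S S', ⟨fun h => ?_, fun h => h ▸ dLF_self S⟩, hsymm S S', ?_⟩
  · exact subset_antisymm (subset_of_dLF_eq_zero hS' h)
      (subset_of_dLF_eq_zero hS ((hsymm S S') ▸ h))
  · -- triangle inequality
    set c := (Real.sqrt 2)⁻¹ with hc
    have hdc : dLF S S'' ≤ c := csInf_le (dLF_bdd S S'') (mem_insert _ _)
    have key : ∀ p ∈ insert c (DSet S S'), ∀ q ∈ insert c (DSet S' S''),
        dLF S S'' ≤ p + q := by
      intro p hp q hq
      have hqpos : 0 < q := by rcases hq with rfl | hq; exacts [hc_pos, hq.1]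
      have hppos : 0 < p := by rcases hp with rfl | hp; exacts [hc_pos, hp.1]
      rcases hp with rfl | hpD
      · linarith
      rcases hq with rfl | hqD
      · linarith
      by_cases hple : p ≤ c
      · by_cases hqle : q ≤ c
        · have hmem : p + q ∈ DSet S S'' := by
            refine ⟨add_pos hppos hqpos, ?_, ?_⟩
            · exact chain hppos hqpos (key_ineq hppos hqpos hple hqle) hpD.2.1 hqD.2.1
            · have := chain hqpos hppos (key_ineq hqpos hppos hqle hple) hqD.2.2 hpD.2.2
              simpa [add_comm q p] using this
          exact csInf_le (dLF_bdd S S'') (mem_insert_of_mem _ hmem)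
        · push_neg at hqle; linarith
      · push_neg at hple; linarith
    have h1 : ∀ q ∈ insert c (DSet S' S''), dLF S S'' - q ≤ dLF S S' := by
      intro q hq
      exact le_csInf ⟨c, mem_insert _ _⟩ fun p hp => by linarith [key p hp q hq]
    have h2 : dLF S S'' - dLF S S' ≤ dLF S' S'' :=
      le_csInf ⟨c, mem_insert _ _⟩ fun q hq => by linarith [h1 q hq]
    linarith
end

section
/- Let (X, d₀) be a pseudometric space with an ℝⁿ-action such that x ↦ x − t is an isometry for each t ∈ ℝⁿ and t ↦ x − t is continuous for each x ∈ X. Then a point x ∈ X is almost periodic (for every ε > 0, the set {t ∈ ℝⁿ : d₀(x − t, x) ≤ ε} is relatively dense) if and only if its orbit O_x = {x − t : t ∈ ℝⁿ} is totally bounded. -/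
open Metric Set

variable {n : ℕ}

/-- A subset of `ℝⁿ` is relatively dense if for some `M > 0` every ball of
radius `M` meets it. -/
def RelativelyDense (P : Set (EuclideanSpace ℝ (Fin n))) : Prop :=
  ∃ M > 0, ∀ x : EuclideanSpace ℝ (Fin n), ∃ t ∈ P, dist x t ≤ M

/-- Let `X` be a pseudometric space equipped with an action `(x, t) ↦ x - t` of `ℝⁿ`
such that each `x ↦ x - t` is an isometry and each `t ↦ x - t` is continuous.
A point `x` is almost periodic if and only if its orbit `O_x = {x - t : t ∈ ℝⁿ}`
is totally bounded. -/
theorem almostPeriodic_iff_orbit_totallyBounded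
    {X : Type*} [PseudoMetricSpace X]
    (sub : X → EuclideanSpace ℝ (Fin n) → X)
    (hzero : ∀ x, sub x 0 = x)
    (hadd : ∀ (x : X) (s t : EuclideanSpace ℝ (Fin n)), sub (sub x s) t = sub x (s + t))
    (hisom : ∀ t : EuclideanSpace ℝ (Fin n), Isometry (fun x => sub x t))
    (hcont : ∀ x : X, Continuous (fun t => sub x t))
    (x : X) :
    (∀ ε > 0, RelativelyDense {t | dist (sub x t) x ≤ ε}) ↔
      TotallyBounded {y : X | ∃ t, y = sub x t} := by
  constructor
  · -- almost periodic → orbit totally bounded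
    intro h
    rw [totallyBounded_iff]
    intro ε hε
    obtain ⟨M, hM, hP⟩ := h (ε/2) (by positivity)
    have hK : IsCompact ((fun t => sub x t) '' closedBall 0 M) :=
      (isCompact_closedBall 0 M).image (hcont x)
    obtain ⟨c, hcfin, hcov⟩ := totallyBounded_iff.mp hK.totallyBounded (ε/2) (by positivity)
    refine ⟨c, hcfin, ?_⟩
    rintro z ⟨t, rfl⟩
    obtain ⟨s, hs, hts⟩ := hP t
    have h1 : sub x (t - s) ∈ (fun t => sub x t) '' closedBall 0 M :=
      ⟨t - s, by simpa [mem_closedBall, dist_eq_norm] using hts, rfl⟩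
    obtain ⟨y, hy, hzy⟩ := mem_iUnion₂.mp (hcov h1)
    refine mem_iUnion₂.mpr ⟨y, hy, ?_⟩
    have h2 : dist (sub x t) (sub x (t - s)) ≤ ε/2 := by
      have hd := (hisom (t - s)).dist_eq (sub x s) x
      rw [hadd] at hd
      have hst : s + (t - s) = t := by abel
      rw [hst] at hd
      rw [hd]
      exact hs
    have hzy' : dist (sub x (t - s)) y < ε/2 := mem_ball.mp hzy
    calc dist (sub x t) y
        ≤ dist (sub x t) (sub x (t - s)) + dist (sub x (t - s)) y := dist_triangle _ _ _
      _ < ε/2 + ε/2 := add_lt_add_of_le_of_lt h2 hzy'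
      _ = ε := by ring
  · -- orbit totally bounded → almost periodic
    intro h ε hε
    obtain ⟨c, hcsub, hcfin, hcov⟩ := finite_approx_of_totallyBounded h ε hε
    have hch : ∀ y ∈ c, ∃ t, y = sub x t := fun y hy => hcsub hy
    choose! τ hτ using hch
    obtain ⟨M', hM'⟩ := ((hcfin.image τ).isBounded).exists_norm_le
    refine ⟨max M' 0 + 1, by positivity, fun u => ?_⟩
    have hu : sub x u ∈ {y : X | ∃ t, y = sub x t} := ⟨u, rfl⟩
    obtain ⟨y, hy, hball⟩ := mem_iUnion₂.mp (hcov hu)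
    refine ⟨u - τ y, ?_, ?_⟩
    · -- dist (sub x (u - τ y)) x ≤ ε
      have e1 : sub (sub x u) (-(τ y)) = sub x (u - τ y) := by
        rw [hadd, ← sub_eq_add_neg]
      have e2 : sub (sub x (τ y)) (-(τ y)) = x := by
        rw [hadd]; simp [hzero]
      have hd := (hisom (-(τ y))).dist_eq (sub x u) (sub x (τ y))
      simp only [e1, e2] at hd
      have hball' : dist (sub x u) y < ε := mem_ball.mp hball
      rw [hτ y hy] at hball'
      show dist (sub x (u - τ y)) x ≤ ε
      rw [hd]
      exact hball'.le
    · have : ‖τ y‖ ≤ M' := hM' (τ y) (mem_image_of_mem τ hy)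
      have hdist : dist u (u - τ y) = ‖τ y‖ := by
        simp [dist_eq_norm]
      rw [hdist]
      calc ‖τ y‖ ≤ M' := this
        _ ≤ max M' 0 := le_max_left _ _
        _ ≤ max M' 0 + 1 := by linarith
end

section
/- If f : ℝⁿ → ℂ is Bohr almost periodic, then the mean value M(f) = lim_{R→∞} (1/|B_R|) ∫_{B_R} f(t) dt exists. -/
open Metric Set Filter MeasureTheory

variable {n : ℕ}

/-- Bohr almost periodicity for functions `ℝⁿ → ℂ`. -/
def BohrAlmostPeriodic (f : EuclideanSpace ℝ (Fin n) → ℂ) : Prop :=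
  Continuous f ∧ ∀ ε > 0,
    RelativelyDense {t | ∀ x, ‖f x - f (x - t)‖ < ε}

/-- Integrability of a continuous function over closed balls. -/
lemma bohrAux_integrableOn (f : EuclideanSpace ℝ (Fin n) → ℂ) (hc : Continuous f)
    (x : EuclideanSpace ℝ (Fin n)) (R : ℝ) : IntegrableOn f (closedBall x R) volume :=
  (hc.locallyIntegrable).integrableOn_isCompact (isCompact_closedBall x R)

/-- Translation of set integrals over balls. -/
lemma bohrAux_translate (f : EuclideanSpace ℝ (Fin n) → ℂ)
    (c : EuclideanSpace ℝ (Fin n)) (R : ℝ) :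
    ∫ y in closedBall (0 : EuclideanSpace ℝ (Fin n)) R, f (y + c) =
      ∫ z in closedBall c R, f z := by
  have h : MeasurePreserving (fun y : EuclideanSpace ℝ (Fin n) => y + c) volume volume :=
    measurePreserving_add_right volume c
  have he : MeasurableEmbedding (fun y : EuclideanSpace ℝ (Fin n) => y + c) :=
    (MeasurableEquiv.addRight c).measurableEmbedding
  have hpre : (fun y : EuclideanSpace ℝ (Fin n) => y + c) ⁻¹' closedBall c R
      = closedBall (0 : EuclideanSpace ℝ (Fin n)) R := by
    ext y; simp [dist_eq_norm]
  rw [← hpre, h.setIntegral_preimage_emb he]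

/-- A Bohr almost periodic function is bounded. -/
lemma bohrAux_bounded (f : EuclideanSpace ℝ (Fin n) → ℂ) (hf : BohrAlmostPeriodic f) :
    ∃ C > 0, ∀ x, ‖f x‖ ≤ C := by
  obtain ⟨M, hM, hMd⟩ := hf.2 1 one_pos
  obtain ⟨C0, hC0⟩ := (isCompact_closedBall (0 : EuclideanSpace ℝ (Fin n)) M).exists_bound_of_continuousOn
    hf.1.continuousOn
  have h0 : 0 ≤ C0 := le_trans (norm_nonneg _) (hC0 0 (mem_closedBall_self hM.le))
  refine ⟨C0 + 1, by linarith, fun x => ?_⟩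
  obtain ⟨t, ht, hxt⟩ := hMd x
  have h1 := ht x
  have h2 : x - t ∈ closedBall (0 : EuclideanSpace ℝ (Fin n)) M := by
    rw [mem_closedBall, dist_zero_right]
    rw [dist_eq_norm] at hxt
    exact hxt
  calc ‖f x‖ = ‖f (x - t) + (f x - f (x - t))‖ := by ring_nf
    _ ≤ ‖f (x - t)‖ + ‖f x - f (x - t)‖ := norm_add_le _ _
    _ ≤ C0 + 1 := add_le_add (hC0 _ h2) h1.le

/-- Moving the center of a ball by at most `M` changes the integral by at most
the volume of an annulus. -/
lemma bohrAux_center_shift (f : EuclideanSpace ℝ (Fin n) → ℂ) (hc : Continuous f)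
    {C : ℝ} (hbd : ∀ x, ‖f x‖ ≤ C) {M : ℝ} (hM : 0 ≤ M)
    {c : EuclideanSpace ℝ (Fin n)} (hcM : ‖c‖ ≤ M) (R : ℝ) :
    ‖(∫ z in closedBall c R, f z) -
      ∫ z in closedBall (0 : EuclideanSpace ℝ (Fin n)) R, f z‖ ≤
      2 * C * (volume (closedBall (0 : EuclideanSpace ℝ (Fin n)) (R + M) \
        closedBall (0 : EuclideanSpace ℝ (Fin n)) (R - M))).toReal := by
  set s := closedBall c R
  set t := closedBall (0 : EuclideanSpace ℝ (Fin n)) R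
  set A := closedBall (0 : EuclideanSpace ℝ (Fin n)) (R + M) \
    closedBall (0 : EuclideanSpace ℝ (Fin n)) (R - M)
  have hAfin : volume A < ⊤ :=
    lt_of_le_of_lt (measure_mono (diff_subset)) measure_closedBall_lt_top
  have hst : s \ t ⊆ A := by
    rintro z ⟨hz1, hz2⟩
    simp only [s, t, A, mem_closedBall, mem_diff, dist_eq_norm, sub_zero, not_le] at *
    have h3 : ‖z‖ ≤ ‖z - c‖ + ‖c‖ := by simpa using norm_add_le (z - c) c
    constructor
    · linarith
    · linarith
  have hts : t \ s ⊆ A := by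
    rintro z ⟨hz1, hz2⟩
    simp only [s, t, A, mem_closedBall, mem_diff, dist_eq_norm, sub_zero, not_le] at *
    have h3 : ‖z - c‖ ≤ ‖z‖ + ‖c‖ := norm_sub_le z c
    constructor
    · linarith
    · linarith
  have hsm : MeasurableSet s := measurableSet_closedBall
  have htm : MeasurableSet t := measurableSet_closedBall
  have hints : IntegrableOn f s volume := bohrAux_integrableOn f hc c R
  have hintt : IntegrableOn f t volume := bohrAux_integrableOn f hc 0 R
  have hs_split : (∫ z in s, f z) = (∫ z in s ∩ t, f z) + ∫ z in s \ t, f z := by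
    have h := setIntegral_union (f := f) (μ := volume)
      (disjoint_sdiff_self_right.mono_left (inter_subset_right : s ∩ t ⊆ t))
      (hsm.diff htm) (hints.mono_set inter_subset_left) (hints.mono_set diff_subset)
    rw [inter_union_diff] at h
    exact h
  have ht_split : (∫ z in t, f z) = (∫ z in s ∩ t, f z) + ∫ z in t \ s, f z := by
    have h := setIntegral_union (f := f) (μ := volume) (s := t ∩ s) (t := t \ s)
      (disjoint_sdiff_self_right.mono_left (inter_subset_right : t ∩ s ⊆ s))
      (htm.diff hsm) (hintt.mono_set inter_subset_left) (hintt.mono_set diff_subset)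
    rw [inter_union_diff] at h
    rw [inter_comm] at h
    exact h
  have key : (∫ z in s, f z) - (∫ z in t, f z)
      = (∫ z in s \ t, f z) - ∫ z in t \ s, f z := by
    rw [hs_split, ht_split]; ring
  rw [key]
  have hb1 : ‖∫ z in s \ t, f z‖ ≤ C * (volume A).toReal := by
    calc ‖∫ z in s \ t, f z‖ ≤ C * (volume (s \ t)).toReal :=
        norm_setIntegral_le_of_norm_le_const (lt_of_le_of_lt (measure_mono hst) hAfin)
          (fun z _ => hbd z)
      _ ≤ C * (volume A).toReal := by
        have h0C : 0 ≤ C := le_trans (norm_nonneg _) (hbd 0)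
        exact mul_le_mul_of_nonneg_left
          (ENNReal.toReal_mono hAfin.ne (measure_mono hst)) h0C
  have hb2 : ‖∫ z in t \ s, f z‖ ≤ C * (volume A).toReal := by
    calc ‖∫ z in t \ s, f z‖ ≤ C * (volume (t \ s)).toReal :=
        norm_setIntegral_le_of_norm_le_const (lt_of_le_of_lt (measure_mono hts) hAfin)
          (fun z _ => hbd z)
      _ ≤ C * (volume A).toReal := by
        have h0C : 0 ≤ C := le_trans (norm_nonneg _) (hbd 0)
        exact mul_le_mul_of_nonneg_left
          (ENNReal.toReal_mono hAfin.ne (measure_mono hts)) h0C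
  calc ‖(∫ z in s \ t, f z) - ∫ z in t \ s, f z‖
      ≤ ‖∫ z in s \ t, f z‖ + ‖∫ z in t \ s, f z‖ := norm_sub_le _ _
    _ ≤ 2 * C * (volume A).toReal := by linarith

/-- Annulus volumes are eventually small compared to the ball volume. -/
lemma bohrAux_annulus (C M ε : ℝ) (hM : 0 < M) (hC : 0 < C) (hε : 0 < ε) :
    ∀ᶠ R in atTop, 2 * C * (volume (closedBall (0 : EuclideanSpace ℝ (Fin n)) (R + M) \
        closedBall (0 : EuclideanSpace ℝ (Fin n)) (R - M))).toReal ≤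
      ε * (volume (closedBall (0 : EuclideanSpace ℝ (Fin n)) R)).toReal := by
  set v1 := (volume (closedBall (0 : EuclideanSpace ℝ (Fin n)) 1)).toReal with hv1def
  have hvol : ∀ r : ℝ, 0 ≤ r →
      (volume (closedBall (0 : EuclideanSpace ℝ (Fin n)) r)).toReal = r ^ n * v1 := by
    intro r hr
    rw [hv1def, Measure.addHaar_closedBall' volume 0 hr, finrank_euclideanSpace_fin,
      ENNReal.toReal_mul, ENNReal.toReal_ofReal (pow_nonneg hr n)]
  have hd : Tendsto (fun R : ℝ => M / R) atTop (nhds 0) := by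
    have := tendsto_inv_atTop_zero.const_mul M
    simpa [div_eq_mul_inv] using this
  have hcont : Continuous (fun x : ℝ => 2 * C * ((1 + x) ^ n - (1 - x) ^ n)) :=
    continuous_const.mul (((continuous_const.add continuous_id).pow n).sub
      ((continuous_const.sub continuous_id).pow n))
  have h1 : Tendsto (fun R : ℝ => 2 * C * ((1 + M / R) ^ n - (1 - M / R) ^ n))
      atTop (nhds 0) := by
    have h := (hcont.tendsto 0).comp hd
    simpa [Function.comp_def] using h
  have h2 : ∀ᶠ R in atTop, 2 * C * ((1 + M / R) ^ n - (1 - M / R) ^ n) < ε :=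
    h1.eventually_lt_const hε
  filter_upwards [h2, eventually_ge_atTop (max M 1)] with R hR hRM
  have hRM' : M ≤ R := le_trans (le_max_left _ _) hRM
  have hR1 : (1 : ℝ) ≤ R := le_trans (le_max_right _ _) hRM
  have hR0 : (0 : ℝ) < R := lt_of_lt_of_le one_pos hR1
  have hsub : closedBall (0 : EuclideanSpace ℝ (Fin n)) (R - M) ⊆
      closedBall (0 : EuclideanSpace ℝ (Fin n)) (R + M) :=
    closedBall_subset_closedBall (by linarith)
  have hdiff : volume (closedBall (0 : EuclideanSpace ℝ (Fin n)) (R + M) \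
      closedBall (0 : EuclideanSpace ℝ (Fin n)) (R - M)) =
      volume (closedBall (0 : EuclideanSpace ℝ (Fin n)) (R + M)) -
        volume (closedBall (0 : EuclideanSpace ℝ (Fin n)) (R - M)) :=
    measure_diff hsub measurableSet_closedBall.nullMeasurableSet
      measure_closedBall_lt_top.ne
  rw [hdiff, ENNReal.toReal_sub_of_le (measure_mono hsub) measure_closedBall_lt_top.ne,
    hvol _ (by linarith), hvol _ (by linarith), hvol _ (by linarith)]
  have key : 2 * C * ((R + M) ^ n - (R - M) ^ n) ≤ ε * R ^ n := by
    have e1 : R + M = R * (1 + M / R) := by field_simp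
    have e2 : R - M = R * (1 - M / R) := by field_simp
    rw [e1, e2, mul_pow, mul_pow]
    calc 2 * C * (R ^ n * (1 + M / R) ^ n - R ^ n * (1 - M / R) ^ n)
        = R ^ n * (2 * C * ((1 + M / R) ^ n - (1 - M / R) ^ n)) := by ring
      _ ≤ R ^ n * ε := mul_le_mul_of_nonneg_left hR.le (pow_nonneg hR0.le n)
      _ = ε * R ^ n := mul_comm _ _
  have hv1nn : 0 ≤ v1 := ENNReal.toReal_nonneg
  have := mul_le_mul_of_nonneg_right key hv1nn
  nlinarith [this]

/-- Key lemma: for large radii, the average of `f` over a ball of radius `R`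
with arbitrary center is close to the average over the centered ball. -/
lemma bohrAux_key (f : EuclideanSpace ℝ (Fin n) → ℂ) (hf : BohrAlmostPeriodic f)
    {C : ℝ} (hC : 0 < C) (hbd : ∀ x, ‖f x‖ ≤ C) {ε : ℝ} (hε : 0 < ε) :
    ∃ R₀ : ℝ, 1 ≤ R₀ ∧ ∀ R, R₀ ≤ R → ∀ x : EuclideanSpace ℝ (Fin n),
      ‖(∫ z in closedBall x R, f z) -
        ∫ z in closedBall (0 : EuclideanSpace ℝ (Fin n)) R, f z‖ ≤
        ε * (volume (closedBall (0 : EuclideanSpace ℝ (Fin n)) R)).toReal := by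
  have hcont := hf.1
  obtain ⟨M, hM, hMd⟩ := hf.2 (ε / 2) (by linarith)
  obtain ⟨R₁, hR₁⟩ := eventually_atTop.mp
    (bohrAux_annulus (n := n) C M (ε / 2) hM hC (by linarith))
  refine ⟨max R₁ 1, le_max_right _ _, fun R hR x => ?_⟩
  have hRR₁ : R₁ ≤ R := le_trans (le_max_left _ _) hR
  obtain ⟨t, ht, hxt⟩ := hMd x
  have hxtn : ‖x - t‖ ≤ M := by rw [← dist_eq_norm]; exact hxt
  have hvolfin : volume (closedBall (0 : EuclideanSpace ℝ (Fin n)) R) < ⊤ :=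
    measure_closedBall_lt_top
  have hint1 : IntegrableOn (fun y => f (y + x))
      (closedBall (0 : EuclideanSpace ℝ (Fin n)) R) volume :=
    ((hcont.comp (continuous_id.add continuous_const)).locallyIntegrable).integrableOn_isCompact
      (isCompact_closedBall _ _)
  have hint2 : IntegrableOn (fun y => f (y + (x - t)))
      (closedBall (0 : EuclideanSpace ℝ (Fin n)) R) volume :=
    ((hcont.comp (continuous_id.add continuous_const)).locallyIntegrable).integrableOn_isCompact
      (isCompact_closedBall _ _)
  have hstep1 : ‖(∫ y in closedBall (0 : EuclideanSpace ℝ (Fin n)) R, f (y + x)) -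
      ∫ y in closedBall (0 : EuclideanSpace ℝ (Fin n)) R, f (y + (x - t))‖ ≤
      (ε / 2) * (volume (closedBall (0 : EuclideanSpace ℝ (Fin n)) R)).toReal := by
    rw [← integral_sub hint1 hint2]
    refine norm_setIntegral_le_of_norm_le_const hvolfin (fun y _ => ?_)
    have heq : y + (x - t) = (y + x) - t := by abel
    rw [heq]
    exact (ht (y + x)).le
  have hstep2 : ‖(∫ z in closedBall (x - t) R, f z) -
      ∫ z in closedBall (0 : EuclideanSpace ℝ (Fin n)) R, f z‖ ≤
      (ε / 2) * (volume (closedBall (0 : EuclideanSpace ℝ (Fin n)) R)).toReal := by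
    calc ‖(∫ z in closedBall (x - t) R, f z) -
        ∫ z in closedBall (0 : EuclideanSpace ℝ (Fin n)) R, f z‖
        ≤ 2 * C * (volume (closedBall (0 : EuclideanSpace ℝ (Fin n)) (R + M) \
            closedBall (0 : EuclideanSpace ℝ (Fin n)) (R - M))).toReal :=
          bohrAux_center_shift f hcont hbd hM.le hxtn R
      _ ≤ (ε / 2) * (volume (closedBall (0 : EuclideanSpace ℝ (Fin n)) R)).toReal :=
          hR₁ R hRR₁
  have e1 : (∫ z in closedBall x R, f z) =
      ∫ y in closedBall (0 : EuclideanSpace ℝ (Fin n)) R, f (y + x) :=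
    (bohrAux_translate f x R).symm
  have e2 : (∫ y in closedBall (0 : EuclideanSpace ℝ (Fin n)) R, f (y + (x - t))) =
      ∫ z in closedBall (x - t) R, f z := bohrAux_translate f (x - t) R
  calc ‖(∫ z in closedBall x R, f z) -
      ∫ z in closedBall (0 : EuclideanSpace ℝ (Fin n)) R, f z‖
      = ‖((∫ y in closedBall (0 : EuclideanSpace ℝ (Fin n)) R, f (y + x)) -
          ∫ y in closedBall (0 : EuclideanSpace ℝ (Fin n)) R, f (y + (x - t))) +
          ((∫ z in closedBall (x - t) R, f z) -
          ∫ z in closedBall (0 : EuclideanSpace ℝ (Fin n)) R, f z)‖ := by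
        rw [e1, ← e2]; ring_nf
    _ ≤ ‖(∫ y in closedBall (0 : EuclideanSpace ℝ (Fin n)) R, f (y + x)) -
          ∫ y in closedBall (0 : EuclideanSpace ℝ (Fin n)) R, f (y + (x - t))‖ +
        ‖(∫ z in closedBall (x - t) R, f z) -
          ∫ z in closedBall (0 : EuclideanSpace ℝ (Fin n)) R, f z‖ := norm_add_le _ _
    _ ≤ ε * (volume (closedBall (0 : EuclideanSpace ℝ (Fin n)) R)).toReal := by
        linarith

/-- A Bohr almost periodic function `f : ℝⁿ → ℂ` admits a mean value
`M(f) = lim_{R→∞} (1/|B_R|) ∫_{B_R} f(t) dt`. -/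
theorem bohrAP_mean_exists (f : EuclideanSpace ℝ (Fin n) → ℂ)
    (hf : BohrAlmostPeriodic f) :
    ∃ m : ℂ, Tendsto (fun R : ℝ =>
      ((volume (closedBall (0 : EuclideanSpace ℝ (Fin n)) R)).toReal : ℂ)⁻¹ *
        ∫ t in closedBall (0 : EuclideanSpace ℝ (Fin n)) R, f t) atTop (nhds m) := by
  obtain ⟨C, hC, hbd⟩ := bohrAux_bounded f hf
  have hcont := hf.1
  set A : ℝ → ℂ := fun R =>
    ((volume (closedBall (0 : EuclideanSpace ℝ (Fin n)) R)).toReal : ℂ)⁻¹ *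
      ∫ t in closedBall (0 : EuclideanSpace ℝ (Fin n)) R, f t with hA
  suffices h : CauchySeq A by
    obtain ⟨a, ha⟩ := cauchySeq_tendsto_of_complete h
    exact ⟨a, ha⟩
  rw [Metric.cauchySeq_iff]
  intro ε hε
  obtain ⟨R₀, hR₀1, hkey⟩ := bohrAux_key f hf hC hbd (show (0:ℝ) < ε / 5 by linarith)
  refine ⟨R₀, fun S hS R hR => ?_⟩
  -- abbreviations
  set BR := closedBall (0 : EuclideanSpace ℝ (Fin n)) R with hBR
  set BS := closedBall (0 : EuclideanSpace ℝ (Fin n)) S with hBS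
  set vR := (volume BR).toReal with hvRdef
  set vS := (volume BS).toReal with hvSdef
  set JR := ∫ z in BR, f z with hJR
  set JS := ∫ z in BS, f z with hJS
  have hR0 : (0:ℝ) < R := lt_of_lt_of_le one_pos (le_trans hR₀1 hR)
  have hS0 : (0:ℝ) < S := lt_of_lt_of_le one_pos (le_trans hR₀1 hS)
  have hvR : 0 < vR :=
    ENNReal.toReal_pos (measure_closedBall_pos volume 0 hR0).ne' measure_closedBall_lt_top.ne
  have hvS : 0 < vS :=
    ENNReal.toReal_pos (measure_closedBall_pos volume 0 hS0).ne' measure_closedBall_lt_top.ne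
  -- Fubini setup
  set μR := volume.restrict BR with hμR
  set μS := volume.restrict BS with hμS
  haveI : IsFiniteMeasure μR := ⟨by
    rw [hμR, Measure.restrict_apply_univ]; exact measure_closedBall_lt_top⟩
  haveI : IsFiniteMeasure μS := ⟨by
    rw [hμS, Measure.restrict_apply_univ]; exact measure_closedBall_lt_top⟩
  have hFm : AEStronglyMeasurable
      (Function.uncurry fun x y : EuclideanSpace ℝ (Fin n) => f (x + y)) (μS.prod μR) :=
    (hcont.comp continuous_add).aestronglyMeasurable
  have hFi : Integrable
      (Function.uncurry fun x y : EuclideanSpace ℝ (Fin n) => f (x + y)) (μS.prod μR) :=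
    (integrable_const C).mono' hFm (ae_of_all _ fun p => hbd _)
  have hswap := integral_integral_swap hFi
  -- pointwise bounds from the key lemma
  have hptR : ∀ x : EuclideanSpace ℝ (Fin n),
      ‖(∫ y, f (x + y) ∂μR) - JR‖ ≤ ε / 5 * vR := by
    intro x
    have h1 : (∫ y, f (x + y) ∂μR) = ∫ y in BR, f (y + x) := by
      rw [hμR]
      exact setIntegral_congr_fun measurableSet_closedBall fun y _ => by rw [add_comm]
    rw [h1, hBR, bohrAux_translate f x R]
    exact hkey R (le_trans (le_refl _) hR) x
  have hptS : ∀ y : EuclideanSpace ℝ (Fin n),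
      ‖(∫ x, f (x + y) ∂μS) - JS‖ ≤ ε / 5 * vS := by
    intro y
    have h1 : (∫ x, f (x + y) ∂μS) = ∫ x in BS, f (x + y) := by rw [hμS]
    rw [h1, hBS, bohrAux_translate f y S]
    exact hkey S hS y
  -- step 1
  have hinner1 : Integrable (fun x => ∫ y, f (x + y) ∂μR) μS := hFi.integral_prod_left
  have hstep1 : ‖(∫ x, (∫ y, f (x + y) ∂μR) ∂μS) - vS • JR‖ ≤ ε / 5 * vR * vS := by
    have heq : (∫ x, (∫ y, f (x + y) ∂μR) ∂μS) - vS • JR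
        = ∫ x, ((∫ y, f (x + y) ∂μR) - JR) ∂μS := by
      rw [integral_sub hinner1 (integrable_const JR), integral_const]
      rw [hμS, measureReal_restrict_apply_univ]; rfl
    rw [heq, hμS]
    exact norm_setIntegral_le_of_norm_le_const measure_closedBall_lt_top
      (fun x _ => hptR x)
  -- step 2
  have hinner2 : Integrable (fun y => ∫ x, f (x + y) ∂μS) μR := hFi.integral_prod_right
  have hstep2 : ‖(∫ y, (∫ x, f (x + y) ∂μS) ∂μR) - vR • JS‖ ≤ ε / 5 * vS * vR := by
    have heq : (∫ y, (∫ x, f (x + y) ∂μS) ∂μR) - vR • JS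
        = ∫ y, ((∫ x, f (x + y) ∂μS) - JS) ∂μR := by
      rw [integral_sub hinner2 (integrable_const JS), integral_const]
      rw [hμR, measureReal_restrict_apply_univ]; rfl
    rw [heq, hμR]
    exact norm_setIntegral_le_of_norm_le_const measure_closedBall_lt_top
      (fun y _ => hptS y)
  -- combine
  have hcomb : ‖vS • JR - vR • JS‖ ≤ 2 * (ε / 5) * (vR * vS) := by
    have : vS • JR - vR • JS
        = ((∫ y, (∫ x, f (x + y) ∂μS) ∂μR) - vR • JS)
          - ((∫ x, (∫ y, f (x + y) ∂μR) ∂μS) - vS • JR) := by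
      rw [← hswap]; ring
    rw [this]
    calc ‖((∫ y, (∫ x, f (x + y) ∂μS) ∂μR) - vR • JS)
          - ((∫ x, (∫ y, f (x + y) ∂μR) ∂μS) - vS • JR)‖
        ≤ ‖(∫ y, (∫ x, f (x + y) ∂μS) ∂μR) - vR • JS‖
          + ‖(∫ x, (∫ y, f (x + y) ∂μR) ∂μS) - vS • JR‖ := norm_sub_le _ _
      _ ≤ 2 * (ε / 5) * (vR * vS) := by linarith
  -- conclude
  have hAR : A R = (vR : ℂ)⁻¹ * JR := rfl
  have hAS : A S = (vS : ℂ)⁻¹ * JS := rfl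
  have hvRne : (vR : ℂ) ≠ 0 := by exact_mod_cast hvR.ne'
  have hvSne : (vS : ℂ) ≠ 0 := by exact_mod_cast hvS.ne'
  have hdist : A S - A R = ((vR * vS : ℝ) : ℂ)⁻¹ * (vR • JS - vS • JR) := by
    rw [hAR, hAS]
    push_cast
    rw [Complex.real_smul, Complex.real_smul]
    field_simp
  rw [dist_eq_norm, hdist]
  rw [norm_mul, norm_inv]
  have hnorm : ‖((vR * vS : ℝ) : ℂ)‖ = vR * vS := by
    rw [Complex.norm_real]
    exact abs_of_pos (mul_pos hvR hvS)
  rw [hnorm]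
  have h1 : ‖vR • JS - vS • JR‖ ≤ 2 * (ε / 5) * (vR * vS) := by
    rw [← norm_neg]
    simpa using hcomb
  calc (vR * vS)⁻¹ * ‖vR • JS - vS • JR‖
      ≤ (vR * vS)⁻¹ * (2 * (ε / 5) * (vR * vS)) := by
        exact mul_le_mul_of_nonneg_left h1 (by positivity)
    _ = 2 * (ε / 5) := by field_simp
    _ < ε := by linarith
end

section
/- Restricted to a linear subspace E of ℝⁿ containing a vector v whose coordinates are linearly independent over ℚ, the translation action on the torus is uniquely ergodic in the following sense: for every continuous h : 𝕋ⁿ → ℝ and every u ∈ 𝕋ⁿ, (1/|B_R^E|) ∫_{B_R^E} h(u − t) dt → ∫_{𝕋ⁿ} h dμ as R → ∞, where μ is the Haar measure on 𝕋ⁿ, B_R^E is the ball of radius R in E centered at 0, and the convergence is uniform in u. -/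
open Metric Set MeasureTheory ENNReal

variable {n : ℕ}

/-- The `n`-dimensional torus `𝕋ⁿ = ℝⁿ/ℤⁿ`, as a product of circles. -/
abbrev Torus (n : ℕ) := Fin n → AddCircle (1 : ℝ)

/-- The projection `ℝⁿ → 𝕋ⁿ`. -/
noncomputable def torusProj (t : EuclideanSpace ℝ (Fin n)) : Torus n :=
  fun i => (t i : AddCircle (1 : ℝ))

/-!
Weyl's argument. The continuous functions on `𝕋ⁿ` whose ball averages converge uniformly to
their mean form a closed subspace of `C(𝕋ⁿ, ℂ)`, because averaging is 1-Lipschitz for the sup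
norm; by Stone–Weierstrass it therefore suffices to treat the characters `e_k`. Since
`e_k (u - t) = e_k u * e_{-k} t`, uniformity in `u` comes for free. For `k ≠ 0` the
functional `φ t = 2π ⟨k, t⟩` does not vanish on `E`, as `φ v ≠ 0` by the `ℚ`-linear
independence of the coordinates of `v`. Translating by a `w ∈ E` with `φ w = π` flips the sign
of `exp (i φ)` while moving the ball of radius `R` only by `‖w‖`, so the ball average of
`exp (i φ)` is at most the relative volume of a shell of width `‖w‖`, which tends to `0`.
-/

open Filter Topology ProbabilityTheory UnitAddTorus

lemma norm_integral_le_of_forall_norm_le {Y E : Type*} [MeasurableSpace Y]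
    [NormedAddCommGroup E] [NormedSpace ℝ E] {ν : Measure Y} [IsZeroOrProbabilityMeasure ν]
    {f : Y → E} {C : ℝ} (hC : 0 ≤ C) (hf : ∀ y, ‖f y‖ ≤ C) : ‖∫ y, f y ∂ν‖ ≤ C :=
  (norm_integral_le_of_norm_le_const (.of_forall hf)).trans <|
    mul_le_of_le_one_right hC measureReal_le_one

namespace ContinuousMap

variable {X Y : Type*} [TopologicalSpace X] [CompactSpace X]
  [TopologicalSpace Y] [MeasurableSpace Y] [OpensMeasurableSpace Y]

lemma integrable_comp (ν : Measure Y) [IsFiniteMeasure ν] (f : C(X, ℂ))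
    {φ : Y → X} (hφ : Continuous φ) : Integrable (fun y => f (φ y)) ν :=
  .of_bound (f.continuous.comp hφ).aestronglyMeasurable ‖f‖
    (.of_forall fun y => f.norm_coe_le_norm (φ y))

lemma dist_integral_comp_le (ν : Measure Y) [IsZeroOrProbabilityMeasure ν]
    (f g : C(X, ℂ)) {φ : Y → X} (hφ : Continuous φ) :
    dist (∫ y, f (φ y) ∂ν) (∫ y, g (φ y) ∂ν) ≤ dist f g := by
  rw [dist_eq_norm, ← integral_sub (f.integrable_comp ν hφ) (g.integrable_comp ν hφ)]
  exact norm_integral_le_of_forall_norm_le dist_nonneg fun y =>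
    dist_eq_norm f g ▸ (f - g).norm_coe_le_norm (φ y)

end ContinuousMap

section Averaging

variable {X Y ι : Type*} [TopologicalSpace X] [AddGroup X] [MeasurableSpace X]
  [MeasurableSpace Y] {μ : Measure X} {m : ι → Measure Y} {l : Filter ι} {ψ : Y → X}

variable (μ m l ψ) in
/-- For the torus, `m R = volume[|closedBall 0 R]` is normalized Lebesgue measure on the ball
of radius `R` in `E`, and `ψ` is the projection `E → 𝕋ⁿ`. -/
def AveragesUniformly (f : C(X, ℂ)) : Prop :=
  TendstoUniformly (fun i u => ∫ t, f (u - ψ t) ∂m i) (fun _ => ∫ x, f x ∂μ) l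

lemma averagesUniformly_zero : AveragesUniformly μ m l ψ 0 := by
  simp only [AveragesUniformly, ContinuousMap.zero_apply, integral_zero]
  exact tendsto_const_nhds.tendstoUniformly_const

lemma AveragesUniformly.const_smul {f : C(X, ℂ)} (hf : AveragesUniformly μ m l ψ f) (c : ℂ) :
    AveragesUniformly μ m l ψ (c • f) := by
  simpa only [AveragesUniformly, ContinuousMap.smul_apply, integral_smul, Function.comp_def]
    using (uniformContinuous_const_smul c).comp_tendstoUniformly hf

variable [CompactSpace X] [IsTopologicalAddGroup X] [BorelSpace X]
  [TopologicalSpace Y] [OpensMeasurableSpace Y]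

lemma AveragesUniformly.add [IsFiniteMeasure μ] [∀ i, IsFiniteMeasure (m i)]
    (hψ : Continuous ψ) {f g : C(X, ℂ)}
    (hf : AveragesUniformly μ m l ψ f) (hg : AveragesUniformly μ m l ψ g) :
    AveragesUniformly μ m l ψ (f + g) := by
  have hcomp (u : X) : Continuous fun t => u - ψ t := continuous_const.sub hψ
  have hfμ : Integrable f μ := f.integrable_comp μ continuous_id
  have hgμ : Integrable g μ := g.integrable_comp μ continuous_id
  simpa only [AveragesUniformly, ContinuousMap.add_apply, integral_add hfμ hgμ,
    integral_add (f.integrable_comp _ (hcomp _)) (g.integrable_comp _ (hcomp _))] using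
    hf.fun_add hg

lemma isClosed_setOf_averagesUniformly [IsZeroOrProbabilityMeasure μ]
    [∀ i, IsZeroOrProbabilityMeasure (m i)] (hψ : Continuous ψ) :
    IsClosed {f | AveragesUniformly μ m l ψ f} := by
  refine isClosed_of_closure_subset fun f hf => Metric.tendstoUniformly_iff.2 fun ε hε => ?_
  obtain ⟨g, hg, hfg⟩ := Metric.mem_closure_iff.1 hf (ε / 3) (by positivity)
  filter_upwards [Metric.tendstoUniformly_iff.1 hg (ε / 3) (by positivity)] with i hi u
  calc _ ≤ dist (∫ x, f x ∂μ) (∫ x, g x ∂μ) + dist (∫ x, g x ∂μ) (∫ t, g (u - ψ t) ∂m i) +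
        dist (∫ t, g (u - ψ t) ∂m i) (∫ t, f (u - ψ t) ∂m i) := dist_triangle4 _ _ _ _
    _ < ε / 3 + ε / 3 + ε / 3 := by
      gcongr
      · exact (f.dist_integral_comp_le μ g continuous_id).trans_lt hfg
      · exact hi u
      · rw [dist_comm] at hfg
        exact (g.dist_integral_comp_le _ f (continuous_const.sub hψ)).trans_lt hfg
    _ = ε := by ring

lemma averagesUniformly_of_span_dense [IsZeroOrProbabilityMeasure μ]
    [∀ i, IsZeroOrProbabilityMeasure (m i)] (hψ : Continuous ψ) {S : Set C(X, ℂ)}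
    (hS : (Submodule.span ℂ S).topologicalClosure = ⊤)
    (hSavg : ∀ s ∈ S, AveragesUniformly μ m l ψ s) (f : C(X, ℂ)) :
    AveragesUniformly μ m l ψ f := by
  have hspan (g) (hg : g ∈ Submodule.span ℂ S) : AveragesUniformly μ m l ψ g :=
    Submodule.span_induction hSavg averagesUniformly_zero (fun _ _ _ _ => .add hψ)
      (fun c _ _ h => h.const_smul c) hg
  have hf : f ∈ closure (Submodule.span ℂ S : Set C(X, ℂ)) := by
    rw [← Submodule.topologicalClosure_coe, hS]
    trivial
  exact closure_minimal hspan (isClosed_setOf_averagesUniformly hψ) hf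

end Averaging

lemma integral_cond_eq_inv_smul {α E : Type*} [MeasurableSpace α] [NormedAddCommGroup E]
    [NormedSpace ℝ E] (μ : Measure α) (s : Set α) (f : α → E) :
    ∫ x, f x ∂μ[|s] = (μ.real s)⁻¹ • ∫ x in s, f x ∂μ := by
  rw [ProbabilityTheory.cond, integral_smul_measure, toReal_inv, measureReal_def]

lemma norm_setIntegral_sub_setIntegral_le {α E : Type*} [MeasurableSpace α]
    [NormedAddCommGroup E] [NormedSpace ℝ E] {μ : Measure α} {f : α → E} {s t : Set α} {C : ℝ}
    (hts : t ⊆ s) (ht : MeasurableSet t) (hs : μ s ≠ ∞) (hf : IntegrableOn f s μ)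
    (hC : ∀ x, ‖f x‖ ≤ C) :
    ‖∫ x in s, f x ∂μ - ∫ x in t, f x ∂μ‖ ≤ C * (μ.real s - μ.real t) := by
  rw [← setIntegral_sdiff ht hf hts, ← measureReal_sdiff hts ht hs]
  exact norm_setIntegral_le_of_norm_le_const ((measure_mono sdiff_subset).trans_lt hs.lt_top)
    fun x _ => hC x

lemma setIntegral_closedBall_add_right {F E : Type*} [NormedAddCommGroup F] [MeasurableSpace F]
    [BorelSpace F] [NormedAddCommGroup E] [NormedSpace ℝ E] (μ : Measure F)
    [μ.IsAddRightInvariant] (f : F → E) (w : F) (R : ℝ) :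
    ∫ t in closedBall (0 : F) R, f (t + w) ∂μ = ∫ t in closedBall w R, f t ∂μ := by
  have hpre : (· + w) ⁻¹' closedBall w R = closedBall (0 : F) R := by
    ext x
    simp [dist_eq_norm]
  rw [← hpre]
  exact (measurePreserving_add_right μ w).setIntegral_preimage_emb
    (MeasurableEquiv.addRight w).measurableEmbedding f _

section HaarBalls

variable {F E : Type*} [NormedAddCommGroup F] [NormedSpace ℝ F] [FiniteDimensional ℝ F]
  [MeasurableSpace F] [BorelSpace F] (μ : Measure F) [μ.IsAddHaarMeasure]
  [NormedAddCommGroup E] [NormedSpace ℝ E]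

lemma norm_setIntegral_closedBall_le_of_antiperiodic {f : F → E} (hf : Continuous f) {C : ℝ}
    (hC : ∀ x, ‖f x‖ ≤ C) {w : F} (hfw : Function.Antiperiodic f w) (R : ℝ) :
    ‖∫ t in closedBall (0 : F) R, f t ∂μ‖ ≤
      C * (μ.real (closedBall (0 : F) R) - μ.real (closedBall (0 : F) (R - ‖w‖))) := by
  set K := closedBall (0 : F) (R - ‖w‖)
  have hK : K ⊆ closedBall 0 R := closedBall_subset_closedBall (by linarith [norm_nonneg w])
  have hKw : K ⊆ closedBall w R := fun x hx => by
    rw [mem_closedBall_zero_iff] at hx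
    rw [mem_closedBall, dist_eq_norm]
    linarith [norm_sub_le x w]
  have hshift : ∫ t in closedBall w R, f t ∂μ = -∫ t in closedBall 0 R, f t ∂μ := by
    rw [← setIntegral_closedBall_add_right, ← integral_neg]
    simp only [hfw _]
  have hint (x : F) : IntegrableOn f (closedBall x R) μ :=
    hf.continuousOn.integrableOn_compact (isCompact_closedBall x R)
  have hB := norm_setIntegral_sub_setIntegral_le hK measurableSet_closedBall
    (measure_closedBall_lt_top (μ := μ)).ne (hint 0) hC
  have hBw := norm_setIntegral_sub_setIntegral_le hKw measurableSet_closedBall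
    (measure_closedBall_lt_top (μ := μ)).ne (hint w) hC
  rw [Measure.addHaar_real_closedBall_center, hshift] at hBw
  have htwo := norm_sub_le (∫ t in closedBall 0 R, f t ∂μ - ∫ t in K, f t ∂μ)
    (-∫ t in closedBall 0 R, f t ∂μ - ∫ t in K, f t ∂μ)
  rw [sub_sub_sub_cancel_right, sub_neg_eq_add, ← two_smul ℝ, norm_smul, Real.norm_two] at htwo
  linarith

lemma tendsto_measureReal_closedBall_sub_div (c : ℝ) :
    Tendsto (fun R => μ.real (closedBall (0 : F) (R - c)) / μ.real (closedBall (0 : F) R))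
      atTop (𝓝 1) := by
  have hV : 0 < μ.real (closedBall (0 : F) 1) :=
    toReal_pos (measure_closedBall_pos μ 0 one_pos).ne' measure_closedBall_lt_top.ne
  have hlim : Tendsto (fun R : ℝ => (1 - c / R) ^ Module.finrank ℝ F) atTop (𝓝 1) := by
    simpa using
      ((tendsto_const_nhds (x := c)).div_atTop tendsto_id).const_sub 1 |>.pow (Module.finrank ℝ F)
  refine hlim.congr' ?_
  filter_upwards [eventually_gt_atTop (max c 0)] with R hR
  have hc : c < R := (le_max_left c 0).trans_lt hR
  have h0 : 0 < R := (le_max_right c 0).trans_lt hR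
  rw [Measure.addHaar_real_closedBall' μ 0 (by linarith),
    Measure.addHaar_real_closedBall' μ 0 h0.le, mul_div_mul_right _ _ hV.ne', ← div_pow, sub_div,
    div_self h0.ne']

lemma tendsto_integral_cond_closedBall_exp {φ : F →ₗ[ℝ] ℝ} (hφ : φ ≠ 0) :
    Tendsto (fun R => ∫ t, Complex.exp (φ t * Complex.I) ∂μ[|closedBall (0 : F) R]) atTop
      (𝓝 0) := by
  obtain ⟨u, hu⟩ : ∃ u, φ u ≠ 0 := by simpa [LinearMap.ext_iff] using hφ
  set w := (Real.pi / φ u) • u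
  have hw : φ w = Real.pi := by simp [w, div_mul_cancel₀ _ hu]
  have hanti : Function.Antiperiodic (fun t => Complex.exp (φ t * Complex.I)) w := fun t => by
    simp only [map_add, hw, Complex.ofReal_add, add_mul, Complex.exp_add, Complex.exp_pi_mul_I,
      mul_neg_one]
  have hcont : Continuous fun t => Complex.exp (φ t * Complex.I) := by
    have := φ.continuous_of_finiteDimensional
    fun_prop
  have hbound (t : F) : ‖Complex.exp (φ t * Complex.I)‖ ≤ 1 :=
    (Complex.norm_exp_ofReal_mul_I _).le
  have hlim := (tendsto_measureReal_closedBall_sub_div μ ‖w‖).const_sub 1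
  rw [sub_self] at hlim
  refine squeeze_zero_norm' ?_ hlim
  filter_upwards [eventually_gt_atTop 0] with R hR
  have hB : 0 < μ.real (closedBall (0 : F) R) :=
    toReal_pos (measure_closedBall_pos μ 0 hR).ne' measure_closedBall_lt_top.ne
  rw [integral_cond_eq_inv_smul, norm_smul, norm_inv, Real.norm_of_nonneg hB.le,
    inv_mul_le_iff₀ hB, mul_sub, mul_one, mul_div_cancel₀ _ hB.ne']
  simpa using norm_setIntegral_closedBall_le_of_antiperiodic μ hcont hbound hanti R

end HaarBalls

instance : IsProbabilityMeasure (volume : Measure UnitAddCircle) :=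
  ⟨by simp [AddCircle.measure_univ]⟩

lemma integral_fourier_of_ne_zero {T : ℝ} [hT : Fact (0 < T)] {m : ℤ} (hm : m ≠ 0) :
    ∫ x : AddCircle T, fourier m x = 0 := by
  have h := integral_add_right_eq_self (μ := volume) (fun x => fourier m x)
    ((T / 2 / m : ℝ) : AddCircle T)
  simp only [fourier_add_half_inv_index hm hT.out, integral_neg] at h
  exact self_eq_neg.1 h.symm

namespace UnitAddTorus

variable {d : Type*} [Fintype d]

lemma mFourier_sub_apply (k : d → ℤ) (u x : UnitAddTorus d) :
    mFourier k (u - x) = mFourier k u * mFourier (-k) x := by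
  simp only [mFourier, ContinuousMap.coe_mk, Pi.neg_apply, ← Finset.prod_mul_distrib]
  refine Finset.prod_congr rfl fun i _ => ?_
  rw [Pi.sub_apply, fourier_apply, fourier_apply, fourier_apply, neg_smul, smul_sub,
    sub_eq_add_neg, AddCircle.toCircle_add, Circle.coe_mul]

lemma integral_mFourier (k : d → ℤ) :
    ∫ x, mFourier k x = if k = 0 then 1 else 0 := by
  split_ifs with hk
  · simp [hk, mFourier_zero]
  · obtain ⟨i, hi⟩ := Function.ne_iff.1 hk
    simp only [mFourier, ContinuousMap.coe_mk, volume_pi]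
    rw [integral_fintype_prod_eq_prod (f := fun i x => fourier (k i) x)]
    exact Finset.prod_eq_zero (Finset.mem_univ i) (integral_fourier_of_ne_zero hi)

end UnitAddTorus

lemma LinearIndependent.sum_intCast_mul_ne_zero {ι : Type*} [Fintype ι] {w : ι → ℝ}
    (hw : LinearIndependent ℚ w) {k : ι → ℤ} (hk : k ≠ 0) : ∑ i, (k i : ℝ) * w i ≠ 0 := by
  intro hsum
  apply hk
  funext i
  have hzero : ∑ i, (k i : ℚ) • w i = 0 := by
    simpa only [Rat.smul_def, Rat.cast_intCast] using hsum
  exact_mod_cast Fintype.linearIndependent_iff.1 hw (fun i => (k i : ℚ)) hzero i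

noncomputable def torusFrequency (k : Fin n → ℤ) : EuclideanSpace ℝ (Fin n) →ₗ[ℝ] ℝ where
  toFun t := 2 * Real.pi * ∑ i, k i * t i
  map_add' s t := by simp only [PiLp.add_apply, mul_add, Finset.sum_add_distrib]
  map_smul' c t := by
    simp only [PiLp.smul_apply, smul_eq_mul, RingHom.id_apply, Finset.mul_sum]
    exact Finset.sum_congr rfl fun i _ => by ring

lemma mFourier_torusProj (k : Fin n → ℤ) (t : EuclideanSpace ℝ (Fin n)) :
    mFourier k (torusProj t) = Complex.exp (torusFrequency k t * Complex.I) := by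
  simp only [mFourier, ContinuousMap.coe_mk, torusProj, fourier_coe_apply, ← Complex.exp_sum]
  congr 1
  simp only [torusFrequency, LinearMap.coe_mk, AddHom.coe_mk]
  push_cast
  rw [Finset.mul_sum, Finset.sum_mul]
  exact Finset.sum_congr rfl fun i _ => by ring

lemma continuous_torusProj : Continuous (torusProj (n := n)) :=
  continuous_pi fun i => (AddCircle.continuous_mk' 1).comp (EuclideanSpace.proj i).continuous

lemma torusFrequency_comp_subtype_ne_zero {E : Submodule ℝ (EuclideanSpace ℝ (Fin n))}
    {v : EuclideanSpace ℝ (Fin n)} (hv : v ∈ E) (hind : LinearIndependent ℚ (fun i => v i))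
    {k : Fin n → ℤ} (hk : k ≠ 0) : (torusFrequency k).comp E.subtype ≠ 0 := by
  intro h
  have hkv : torusFrequency k v = 0 := by simpa using LinearMap.congr_fun h ⟨v, hv⟩
  simp only [torusFrequency, LinearMap.coe_mk, AddHom.coe_mk, mul_eq_zero, Real.pi_ne_zero,
    two_ne_zero, or_self, false_or] at hkv
  exact hind.sum_intCast_mul_ne_zero hk hkv

section TorusAverages

variable {E : Submodule ℝ (EuclideanSpace ℝ (Fin n))}

lemma tendsto_integral_cond_closedBall_mFourier
    (hE : ∀ k ≠ 0, (torusFrequency k).comp E.subtype ≠ 0) (k : Fin n → ℤ) :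
    Tendsto (fun R => ∫ t, mFourier k (torusProj (t : EuclideanSpace ℝ (Fin n)))
      ∂volume[|closedBall (0 : E) R]) atTop (𝓝 (if k = 0 then 1 else 0)) := by
  split_ifs with hk
  · refine tendsto_const_nhds.congr' ?_
    filter_upwards [eventually_gt_atTop 0] with R hR
    have := cond_isProbabilityMeasure_of_finite (measure_closedBall_pos volume (0 : E) hR).ne'
      measure_closedBall_lt_top.ne
    simp [hk, mFourier_zero]
  · have hdecay := tendsto_integral_cond_closedBall_exp volume (hE k hk)
    simp only [LinearMap.comp_apply, Submodule.subtype_apply] at hdecay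
    simpa only [mFourier_torusProj] using hdecay

lemma averagesUniformly_mFourier (hE : ∀ k ≠ 0, (torusFrequency k).comp E.subtype ≠ 0)
    (k : Fin n → ℤ) :
    AveragesUniformly volume (fun R => volume[|closedBall (0 : E) R]) atTop
      (fun t => torusProj (t : EuclideanSpace ℝ (Fin n))) (mFourier k) := by
  have hlim := tendsto_integral_cond_closedBall_mFourier hE (-k)
  simp only [neg_eq_zero] at hlim
  rw [← integral_mFourier] at hlim
  refine Metric.tendstoUniformly_iff.2 fun ε hε => ?_
  filter_upwards [Metric.tendsto_nhds.1 hlim ε hε] with R hR u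
  have hmean : ∫ x, mFourier k x = mFourier k u * ∫ x, mFourier k x := by
    rw [integral_mFourier]
    split_ifs with hk
    · simp [hk, mFourier_zero]
    · rw [mul_zero]
  simp only [mFourier_sub_apply, integral_const_mul]
  rw [hmean, dist_eq_norm, ← mul_sub, norm_mul, ← dist_eq_norm, dist_comm]
  calc _ ≤ 1 * dist _ _ := by
        gcongr
        exact ((mFourier k).norm_coe_le_norm u).trans_eq mFourier_norm
    _ < ε := by rwa [one_mul]

end TorusAverages

/-- If the subspace `E` of `ℝⁿ` contains a vector whose coordinates are linearly
independent over `ℚ`, then the translation action of `E` on the torus `𝕋ⁿ` is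
uniquely ergodic: Birkhoff averages over balls of `E` of any continuous function
converge to its Haar mean, uniformly in the starting point. -/
theorem torus_unique_ergodicity
    (E : Submodule ℝ (EuclideanSpace ℝ (Fin n)))
    (v : EuclideanSpace ℝ (Fin n)) (hv : v ∈ E)
    (hind : LinearIndependent ℚ (fun i : Fin n => v i))
    (h : Torus n → ℝ) (hcont : Continuous h) :
    ∀ ε > 0, ∃ R₀ : ℝ, ∀ R ≥ R₀, ∀ u : Torus n,
      |(volume (closedBall (0 : E) R)).toReal⁻¹ *
          (∫ t in closedBall (0 : E) R, h (u - torusProj (t : EuclideanSpace ℝ (Fin n)))) -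
        ∫ x, h x| ≤ ε := by
  have hψ : Continuous fun t : E => torusProj (t : EuclideanSpace ℝ (Fin n)) :=
    continuous_torusProj.comp continuous_subtype_val
  have havg := averagesUniformly_of_span_dense (l := atTop) hψ span_mFourier_closure_eq_top
    (by
      rintro _ ⟨k, rfl⟩
      exact averagesUniformly_mFourier
        (fun k hk => torusFrequency_comp_subtype_ne_zero hv hind hk) k)
    ⟨fun x => (h x : ℂ), Complex.continuous_ofReal.comp hcont⟩
  intro ε hε
  obtain ⟨R₀, hR₀⟩ := eventually_atTop.1 (Metric.tendstoUniformly_iff.1 havg ε hε)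
  refine ⟨R₀, fun R hR u => ?_⟩
  have hdist := (hR₀ R hR u).le
  rw [dist_comm, Complex.dist_eq] at hdist
  simpa only [ContinuousMap.coe_mk, integral_cond_eq_inv_smul, integral_complex_ofReal,
    measureReal_def, Complex.real_smul, ← Complex.ofReal_mul, ← Complex.ofReal_sub,
    Complex.norm_real, Real.norm_eq_abs] using hdist
end
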